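/- arXiv:1004.1050 — 11 statements merged into one kernel-verified Lean document; each statement's English description precedes it below -/
import Mathlib

section
/- If E is a nil evolution algebra with natural basis e_1,...,e_n and structure matrix A=(a_{ij}) (meaning e_i·e_i = Σ_k a_{ik}e_k and e_i·e_j = 0 for i≠j), then every diagonal entry vanishes: a_{ii} = 0 for all i. -/
/-- Right-normed powers: `rnpow x k` is the right-normed power `x^{k+1}`,
i.e. `rnpow x 0 = x` and `rnpow x (k+1) = (rnpow x k) * x`. -/
def rnpow {E : Type*} [Mul E] (x : E) : ℕ → E
  | 0 => x
  | k + 1 => rnpow x k * x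

/-! If `e i` is a natural basis vector, then `(e i * e i) * e i = a i i • (e i * e i)`, so the
right-normed powers of `e i` are `a i i ^ m • (e i * e i)`. Reading off the `i`-th coordinate,
nilpotency of `e i` forces `a i i ^ (m + 1) = 0`. -/

theorem rnpow_succ_eq_pow_smul_mul_self {K E : Type*} [Monoid K] [NonUnitalNonAssocSemiring E]
    [DistribMulAction K E] [IsScalarTower K E E] {x : E} {c : K}
    (hx : x * x * x = c • (x * x)) (m : ℕ) :
    rnpow x (m + 1) = c ^ m • (x * x) := by
  induction m with
  | zero => simp [rnpow]
  | succ m ih =>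
    calc rnpow x (m + 2) = (c ^ m • (x * x)) * x := congrArg (· * x) ih
      _ = c ^ (m + 1) • (x * x) := by rw [smul_mul_assoc, hx, smul_smul, pow_succ]

theorem mul_self_mul_eq_diag_smul_mul_self {K E ι : Type*} [Fintype ι] [CommSemiring K]
    [NonUnitalNonAssocSemiring E] [Module K E] [IsScalarTower K E E]
    {e : ι → E} {a : Matrix ι ι K}
    (hmul0 : ∀ i j, i ≠ j → e i * e j = 0) (hsq : ∀ i, e i * e i = ∑ k, a i k • e k) (i : ι) :
    e i * e i * e i = a i i • (e i * e i) := by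
  rw [hsq i, Finset.sum_mul, Finset.sum_eq_single i]
  · rw [smul_mul_assoc, hsq i]
  · intro k _ hk
    rw [smul_mul_assoc, hmul0 k i hk, smul_zero]
  · simp

theorem stmt0_general {K : Type*} [Field K] {E : Type*} [NonUnitalNonAssocRing E]
    [Module K E] [IsScalarTower K E E]
    {n : ℕ} (b : Module.Basis (Fin n) K E) (a : Matrix (Fin n) (Fin n) K)
    (hmul0 : ∀ i j, i ≠ j → b i * b j = 0)
    (hsq : ∀ i, b i * b i = ∑ k, a i k • b k)
    (hnil : ∀ x : E, ∃ m : ℕ, rnpow x (m + 1) = 0) :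
    ∀ i, a i i = 0 := by
  intro i
  obtain ⟨m, hm⟩ := hnil (b i)
  rw [rnpow_succ_eq_pow_smul_mul_self (mul_self_mul_eq_diag_smul_mul_self hmul0 hsq i)] at hm
  have hcoord : a i i ^ (m + 1) = 0 := by
    rw [pow_succ]
    have hrepr := congrArg (fun v => b.repr v i) hm
    simpa only [hsq i, map_smul, Finsupp.smul_apply, b.repr_sum_self, smul_eq_mul, map_zero,
      Finsupp.coe_zero, Pi.zero_apply] using hrepr
  exact eq_zero_of_pow_eq_zero hcoord

/-- If `E` is a nil evolution algebra with natural basis `e₁,…,eₙ` and structure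
matrix `A = (a i j)`, then all diagonal entries of `A` vanish. -/
theorem stmt0 {K : Type*} [Field K] {E : Type*} [NonUnitalNonAssocRing E]
    [Module K E] [SMulCommClass K E E] [IsScalarTower K E E]
    {n : ℕ} (b : Module.Basis (Fin n) K E) (a : Matrix (Fin n) (Fin n) K)
    (hmul0 : ∀ i j, i ≠ j → b i * b j = 0)
    (hsq : ∀ i, b i * b i = ∑ k, a i k • b k)
    (hnil : ∀ x : E, ∃ m : ℕ, rnpow x (m + 1) = 0) :
    ∀ i, a i i = 0 :=
  stmt0_general b a hmul0 hsq hnil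
end

section
/- If E is a nil evolution algebra with structure matrix A = (a_{ij}), then for any two distinct indices i, j one has a_{ij} a_{ji} = 0. -/
/-!
Right-normed powers of `x` are the iterates of right multiplication `R_x` on `x * x`, so if
`R_x ^ p (x * x) = c • (x * x)` with `p ≥ 1`, nilness of `x` forces `c = 0` or `x * x = 0`.
For `x = e_i` this applies with `p = 1` and `c = a_ii`, so the diagonal vanishes. Then for
`x = e_i + e_j` one has `x * x = e_i² + e_j²`, and `R_x` maps this to `a_ji e_i² + a_ij e_j²` and
back to `a_ij a_ji (e_i² + e_j²)`; the `e_j`-coordinate of `e_i² + e_j²` is `a_ij`.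
-/

open LinearMap

theorem rnpow_eq_zero_of_le {E : Type*} [MulZeroClass E] {x : E} {m m' : ℕ}
    (hm : rnpow x m = 0) (hle : m ≤ m') : rnpow x m' = 0 := by
  induction hle with
  | refl => exact hm
  | step _ ih => rw [rnpow, ih, zero_mul]

theorem rnpow_succ_eq_mulRight_pow_apply {R E : Type*} [Semiring R] [NonUnitalNonAssocSemiring E]
    [Module R E] [IsScalarTower R E E] (x : E) (k : ℕ) :
    rnpow x (k + 1) = (mulRight R x ^ k) (x * x) := by
  induction k with
  | zero => rfl
  | succ k ih => rw [rnpow, ih, pow_succ', Module.End.mul_apply, mulRight_apply]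

theorem eq_zero_or_mul_self_eq_zero_of_rnpow_eq_zero {K E : Type*} [Field K]
    [NonUnitalNonAssocRing E] [Module K E] [IsScalarTower K E E] {x : E} {p : ℕ} {c : K}
    (hp : 0 < p) (hx : ∃ m, rnpow x (m + 1) = 0) (h : (mulRight K x ^ p) (x * x) = c • (x * x)) :
    c = 0 ∨ x * x = 0 := by
  refine or_iff_not_imp_right.2 fun hne => ?_
  obtain ⟨m, hm⟩ := hx
  have hv : Module.End.HasEigenvector (mulRight K x ^ p) c (x * x) :=
    Module.End.hasEigenvector_iff.2 ⟨Module.End.mem_eigenspace_iff.2 h, hne⟩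
  have hvanish : c ^ (m + 1) • (x * x) = 0 := by
    rw [← hv.pow_apply, ← pow_mul, ← rnpow_succ_eq_mulRight_pow_apply]
    exact rnpow_eq_zero_of_le hm (by nlinarith)
  exact eq_zero_of_pow_eq_zero ((smul_eq_zero.1 hvanish).resolve_right hne)

section EvolutionAlgebra

variable {R E ι : Type*} [CommSemiring R] [NonUnitalNonAssocSemiring E] [Module R E]
  (b : Module.Basis ι R E)

theorem add_basis_mul_self (hmul0 : ∀ i j, i ≠ j → b i * b j = 0) {i j : ι} (hij : i ≠ j) :
    (b i + b j) * (b i + b j) = b i * b i + b j * b j := by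
  rw [add_mul, mul_add, mul_add, hmul0 i j hij, hmul0 j i hij.symm, add_zero, zero_add]

variable [Fintype ι]

theorem repr_mul_self_basis {a : ι → ι → R} (hsq : ∀ i, b i * b i = ∑ k, a i k • b k) (i : ι) :
    ⇑(b.repr (b i * b i)) = a i := by
  rw [hsq, b.repr_sum_self]

variable [IsScalarTower R E E]

theorem mul_basis_eq_repr_smul (hmul0 : ∀ i j, i ≠ j → b i * b j = 0) (x : E) (i : ι) :
    x * b i = b.repr x i • (b i * b i) := by
  conv_lhs => rw [← b.sum_repr x]
  rw [Finset.sum_mul, Finset.sum_eq_single i (fun k _ hk => by rw [smul_mul_assoc, hmul0 k i hk,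
    smul_zero]) (fun hi => absurd (Finset.mem_univ i) hi), smul_mul_assoc]

theorem mulRight_add_basis_sq_apply_mul_self {a : ι → ι → R}
    (hmul0 : ∀ i j, i ≠ j → b i * b j = 0) (hsq : ∀ i, b i * b i = ∑ k, a i k • b k)
    {i j : ι} (hij : i ≠ j) (hii : a i i = 0) (hjj : a j j = 0) :
    (mulRight R (b i + b j) ^ 2) ((b i + b j) * (b i + b j)) =
      (a i j * a j i) • ((b i + b j) * (b i + b j)) := by
  have hright (y : E) :
      y * (b i + b j) = b.repr y i • (b i * b i) + b.repr y j • (b j * b j) := by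
    rw [mul_add, mul_basis_eq_repr_smul b hmul0 y i, mul_basis_eq_repr_smul b hmul0 y j]
  rw [sq, Module.End.mul_apply, mulRight_apply, mulRight_apply, add_basis_mul_self b hmul0 hij,
    hright, hright]
  simp only [map_add, map_smul, Finsupp.coe_add, Finsupp.coe_smul, Pi.add_apply, Pi.smul_apply,
    repr_mul_self_basis b hsq, hii, hjj, smul_eq_mul, mul_zero, zero_add, add_zero, smul_add]
  rw [mul_comm (a j i)]

end EvolutionAlgebra

theorem diag_eq_zero_of_nil {K E ι : Type*} [Field K] [NonUnitalNonAssocRing E] [Module K E]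
    [IsScalarTower K E E] [Fintype ι] (b : Module.Basis ι K E) {a : ι → ι → K}
    (hmul0 : ∀ i j, i ≠ j → b i * b j = 0) (hsq : ∀ i, b i * b i = ∑ k, a i k • b k)
    (hnil : ∀ x : E, ∃ m : ℕ, rnpow x (m + 1) = 0) (i : ι) :
    a i i = 0 := by
  have hrepr := repr_mul_self_basis b hsq i
  have hright : (mulRight K (b i) ^ 1) (b i * b i) = a i i • (b i * b i) := by
    rw [pow_one, mulRight_apply, mul_basis_eq_repr_smul b hmul0, hrepr]
  rcases eq_zero_or_mul_self_eq_zero_of_rnpow_eq_zero one_pos (hnil (b i)) hright with h | h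
  · exact h
  · rw [← congr_fun hrepr i, h, map_zero, Finsupp.coe_zero, Pi.zero_apply]

theorem stmt1_general {E : Type*} [NonUnitalNonAssocRing E]
    [Module ℂ E] [IsScalarTower ℂ E E]
    {n : ℕ} (b : Module.Basis (Fin n) ℂ E) (a : Matrix (Fin n) (Fin n) ℂ)
    (hmul0 : ∀ i j, i ≠ j → b i * b j = 0)
    (hsq : ∀ i, b i * b i = ∑ k, a i k • b k)
    (hnil : ∀ x : E, ∃ m : ℕ, rnpow x (m + 1) = 0) :
    ∀ i j, i ≠ j → a i j * a j i = 0 := by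
  intro i j hij
  have hdiag := diag_eq_zero_of_nil b hmul0 hsq hnil
  rcases eq_zero_or_mul_self_eq_zero_of_rnpow_eq_zero two_pos (hnil (b i + b j))
    (mulRight_add_basis_sq_apply_mul_self b hmul0 hsq hij (hdiag i) (hdiag j)) with h | h
  · exact h
  · rw [add_basis_mul_self b hmul0 hij] at h
    have hcoeff : a i j = 0 := by
      simpa [repr_mul_self_basis b hsq, hdiag j] using congr_arg (fun y => b.repr y j) h
    rw [hcoeff, zero_mul]

/-- If `E` is a nil evolution algebra (over ℂ) with structure matrix `A = (a i j)`,
then for distinct indices `i ≠ j` one has `a i j * a j i = 0`. -/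
theorem stmt1 {E : Type*} [NonUnitalNonAssocRing E]
    [Module ℂ E] [SMulCommClass ℂ E E] [IsScalarTower ℂ E E]
    {n : ℕ} (b : Module.Basis (Fin n) ℂ E) (a : Matrix (Fin n) (Fin n) ℂ)
    (hmul0 : ∀ i j, i ≠ j → b i * b j = 0)
    (hsq : ∀ i, b i * b i = ∑ k, a i k • b k)
    (hnil : ∀ x : E, ∃ m : ℕ, rnpow x (m + 1) = 0) :
    ∀ i j, i ≠ j → a i j * a j i = 0 :=
  stmt1_general b a hmul0 hsq hnil
end

section
/- Let E be a nil evolution algebra with structure matrix A = (a_{ij}) of size n. Then for every k ∈ {1,...,n} and every tuple of pairwise distinct indices i_1, ..., i_k ∈ {1,...,n}, the cyclic product a_{i_1 i_2} a_{i_2 i_3} ⋯ a_{i_k i_1} equals 0. -/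
section Cycle

variable {ι : Type*} (r : ι → ι → Prop)

def IsRelCycle {k : ℕ} (i : Fin (k + 1) → ι) : Prop :=
  Function.Injective i ∧ ∀ m, r (i m) (i (m + 1))

def IsChordless {k : ℕ} (i : Fin (k + 1) → ι) : Prop :=
  ∀ j l, r (i j) (i l) → l = j + 1

variable {r}

theorem IsRelCycle.exists_shorter_of_chord {k : ℕ} {i : Fin (k + 1) → ι}
    (hi : IsRelCycle r i) {j l : Fin (k + 1)} (hjl : r (i j) (i l)) (hl : l ≠ j + 1) :
    ∃ d < k, ∃ c : Fin (d + 1) → ι, IsRelCycle r c := by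
  -- the chord closes the arc `l, l + 1, …, j` of `i` into a cycle of length `d + 1`
  set d := (j - l).val
  have hd : d + 1 ≤ k + 1 := (j - l).isLt
  have hdk : d ≠ k := by
    intro h
    have : j - l = Fin.last k := Fin.ext h
    exact hl (by rw [← add_zero l, ← Fin.last_add_one, ← this]; abel)
  refine ⟨d, by omega, fun s => i (l + Fin.castLE hd s), fun s t hst => ?_, fun s => ?_⟩
  · exact Fin.castLE_injective hd (add_left_cancel (hi.1 hst))
  · rcases Fin.eq_castSucc_or_eq_last s with ⟨t, rfl⟩ | rfl
    · have hsucc : Fin.castLE hd t.castSucc + 1 = Fin.castLE hd (t.castSucc + 1) := by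
        rw [Fin.coeSucc_eq_succ]
        ext
        simp [Fin.val_add, Nat.mod_eq_of_lt (show t.val + 1 < k + 1 by omega)]
      simpa only [← hsucc, add_assoc] using hi.2 (l + Fin.castLE hd t.castSucc)
    · have hlast : Fin.castLE hd (Fin.last d) = j - l := Fin.ext rfl
      simpa [hlast] using hjl

theorem IsRelCycle.exists_chordless {k : ℕ} {i : Fin (k + 1) → ι} (hi : IsRelCycle r i) :
    ∃ (d : ℕ) (c : Fin (d + 1) → ι), IsRelCycle r c ∧ IsChordless r c := by
  induction k using Nat.strong_induction_on with
  | _ k ih =>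
    by_cases hch : IsChordless r i
    · exact ⟨k, i, hi, hch⟩
    · simp only [IsChordless, not_forall] at hch
      obtain ⟨j, l, hjl, hl⟩ := hch
      obtain ⟨d, hdk, c, hc⟩ := hi.exists_shorter_of_chord hjl hl
      exact ih d hdk hc

end Cycle

namespace EvolutionAlgebra

variable {R E ι : Type*} [CommRing R] [NonUnitalNonAssocSemiring E] [Module R E]
  [IsScalarTower R E E] [Fintype ι] {b : Module.Basis ι R E} {a : Matrix ι ι R}

theorem mul_basis (hmul0 : ∀ i j, i ≠ j → b i * b j = 0) (y : E) (p : ι) :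
    y * b p = b.repr y p • (b p * b p) := by
  conv_lhs => rw [← b.sum_repr y]
  rw [Finset.sum_mul, Finset.sum_eq_single p]
  · rw [smul_mul_assoc]
  · intro q _ hq
    rw [smul_mul_assoc, hmul0 q p hq, smul_zero]
  · simp

theorem repr_mul_basis (hmul0 : ∀ i j, i ≠ j → b i * b j = 0)
    (hsq : ∀ i, b i * b i = ∑ k, a i k • b k) (y : E) (p q : ι) :
    b.repr (y * b p) q = b.repr y p * a p q := by
  rw [mul_basis hmul0, hsq, map_smul, Finsupp.smul_apply, b.repr_sum_self, smul_eq_mul]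

theorem repr_rnpow_sum_ne_zero [IsDomain R] (hmul0 : ∀ i j, i ≠ j → b i * b j = 0)
    (hsq : ∀ i, b i * b i = ∑ k, a i k • b k) {k : ℕ} {i : Fin (k + 1) → ι}
    (hcyc : IsRelCycle (fun p q => a p q ≠ 0) i) (hch : IsChordless (fun p q => a p q ≠ 0) i)
    (t : ℕ) (l : Fin (k + 1)) : b.repr (rnpow (∑ m, b (i m)) t) (i l) ≠ 0 := by
  induction t generalizing l with
  | zero =>
    classical
    simp [rnpow, Finsupp.finsetSum_apply, Finsupp.single_apply, hcyc.1.eq_iff]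
  | succ t ih =>
    have hprev : ∀ m, m ≠ l - 1 → a (i m) (i l) = 0 := fun m hm => by
      by_contra h
      exact hm (eq_sub_of_add_eq (hch m l h).symm)
    rw [rnpow, Finset.mul_sum, map_sum, Finsupp.finsetSum_apply,
      Finset.sum_eq_single (l - 1)
        (fun m _ hm => by rw [repr_mul_basis hmul0 hsq, hprev m hm, mul_zero]) (by simp),
      repr_mul_basis hmul0 hsq]
    refine mul_ne_zero (ih _) ?_
    simpa using hcyc.2 (l - 1)

end EvolutionAlgebra

open EvolutionAlgebra in
theorem stmt3_general {E : Type*} [NonUnitalNonAssocRing E]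
    [Module ℂ E] [IsScalarTower ℂ E E]
    {n : ℕ} (b : Module.Basis (Fin n) ℂ E) (a : Matrix (Fin n) (Fin n) ℂ)
    (hmul0 : ∀ i j, i ≠ j → b i * b j = 0)
    (hsq : ∀ i, b i * b i = ∑ k, a i k • b k)
    (hnil : ∀ x : E, ∃ m : ℕ, rnpow x (m + 1) = 0) :
    ∀ (k : ℕ) (i : Fin (k + 1) → Fin n), Function.Injective i →
      ∏ m : Fin (k + 1), a (i m) (i (m + 1)) = 0 := by
  intro k i hi
  by_contra hprod
  have hcyc : IsRelCycle (fun p q => a p q ≠ 0) i :=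
    ⟨hi, fun m => Finset.prod_ne_zero_iff.mp hprod m (Finset.mem_univ m)⟩
  obtain ⟨d, c, hc, hch⟩ := hcyc.exists_chordless
  obtain ⟨t, ht⟩ := hnil (∑ m, b (c m))
  exact repr_rnpow_sum_ne_zero hmul0 hsq hc hch (t + 1) 0 (by simp [ht])

/-- If `E` is a nil evolution algebra over ℂ with structure matrix `A`, then
every cyclic product `a_{i₁i₂} a_{i₂i₃} ⋯ a_{iₖi₁}` over pairwise distinct
indices vanishes.  (The tuple is `i : Fin (k+1) → Fin n`, injective, and the
product is taken cyclically.) -/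
theorem stmt3 {E : Type*} [NonUnitalNonAssocRing E]
    [Module ℂ E] [SMulCommClass ℂ E E] [IsScalarTower ℂ E E]
    {n : ℕ} (b : Module.Basis (Fin n) ℂ E) (a : Matrix (Fin n) (Fin n) ℂ)
    (hmul0 : ∀ i j, i ≠ j → b i * b j = 0)
    (hsq : ∀ i, b i * b i = ∑ k, a i k • b k)
    (hnil : ∀ x : E, ∃ m : ℕ, rnpow x (m + 1) = 0) :
    ∀ (k : ℕ) (i : Fin (k + 1) → Fin n), Function.Injective i →
      ∏ m : Fin (k + 1), a (i m) (i (m + 1)) = 0 :=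
  stmt3_general b a hmul0 hsq hnil
end

section
/- Let A be an n×n matrix over a field such that for every k and every tuple of pairwise distinct indices i_1,...,i_k the cyclic product a_{i_1 i_2} a_{i_2 i_3} ⋯ a_{i_k i_1} vanishes (in particular all a_{ii} = 0). Then A has a row consisting entirely of zeros. -/
/-!
Choosing in every row a nonzero entry defines a self-map `f` of the finite index set with
`A r (f r) ≠ 0` for all `r`. Every self-map of a finite nonempty set has a periodic orbit, and
following `f` around it gives pairwise distinct indices whose cyclic product is nonzero.
-/

namespace Function

variable {α : Type*} {f : α → α}

theorem exists_iterate_mem_periodicPts [Finite α] (f : α → α) (x : α) :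
    ∃ m, f^[m] x ∈ periodicPts f := by
  obtain ⟨a, b, hab, heq⟩ := Finite.exists_ne_map_eq_of_infinite (fun m : ℕ => f^[m] x)
  wlog hlt : a < b generalizing a b
  · exact this b a hab.symm heq.symm (hab.lt_or_gt.resolve_left hlt)
  refine ⟨a, mk_mem_periodicPts (Nat.sub_pos_of_lt hlt) ?_⟩
  change f^[b - a] (f^[a] x) = f^[a] x
  rw [← iterate_add_apply, Nat.sub_add_cancel hlt.le]
  exact heq.symm

theorem injective_iterate_fin_of_minimalPeriod_eq {x : α} {k : ℕ}
    (hk : minimalPeriod f x = k + 1) : Injective fun m : Fin (k + 1) => f^[m] x :=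
  fun m m' h => Fin.ext <| iterate_injOn_Iio_minimalPeriod
    (by simp [hk, m.isLt] : (m : ℕ) ∈ Set.Iio (minimalPeriod f x))
    (by simp [hk, m'.isLt] : (m' : ℕ) ∈ Set.Iio (minimalPeriod f x)) h

theorem apply_iterate_fin_of_minimalPeriod_eq {x : α} {k : ℕ}
    (hk : minimalPeriod f x = k + 1) (m : Fin (k + 1)) :
    f (f^[m] x) = f^[(m + 1 : Fin (k + 1))] x := by
  have hmod := iterate_mod_minimalPeriod_eq (f := f) (x := x) (n := m + 1)
  rw [hk] at hmod
  rw [Fin.val_add, Fin.val_one', Nat.add_mod_mod, hmod, iterate_succ_apply']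

theorem exists_injective_fin_cycle [Finite α] [Nonempty α] (f : α → α) :
    ∃ (k : ℕ) (i : Fin (k + 1) → α), Injective i ∧ ∀ m, f (i m) = i (m + 1) := by
  obtain ⟨m, hm⟩ := exists_iterate_mem_periodicPts f (Classical.arbitrary α)
  obtain ⟨k, hk⟩ := Nat.exists_eq_add_one.mpr (minimalPeriod_pos_of_mem_periodicPts hm)
  exact ⟨k, _, injective_iterate_fin_of_minimalPeriod_eq hk,
    apply_iterate_fin_of_minimalPeriod_eq hk⟩

end Function

/-- If every cyclic product of entries of an `n×n` matrix `A` over pairwise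
distinct indices vanishes (in particular all diagonal entries are `0`),
then `A` has a row consisting entirely of zeros. -/
theorem stmt4 {K : Type*} [Field K] {n : ℕ} (hn : 0 < n)
    (A : Matrix (Fin n) (Fin n) K)
    (hcyc : ∀ (k : ℕ) (i : Fin (k + 1) → Fin n), Function.Injective i →
      ∏ m : Fin (k + 1), A (i m) (i (m + 1)) = 0) :
    ∃ r : Fin n, ∀ j : Fin n, A r j = 0 := by
  by_contra! hrow
  choose f hf using hrow
  have : Nonempty (Fin n) := ⟨⟨0, hn⟩⟩
  obtain ⟨k, i, hinj, hcycle⟩ := Function.exists_injective_fin_cycle f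
  refine Finset.prod_ne_zero_iff.mpr (fun m _ => ?_) (hcyc k i hinj)
  rw [← hcycle]
  exact hf (i m)
end

section
/- Let A be an n×n matrix over a field such that every cyclic product a_{i_1 i_2} a_{i_2 i_3} ⋯ a_{i_k i_1} over pairwise distinct indices vanishes. Then for each j ∈ {1,...,n} there exists a row π_j of A containing at least j zero entries, and these rows can be chosen pairwise distinct (π_{j_1} ≠ π_{j_2} for j_1 ≠ j_2). -/
/-!
Draw an edge `v → w` whenever `a_{vw} ≠ 0`. The vanishing of all cyclic products says that this
digraph has no simple cycle, hence no cycle at all (walking along edges inside a finite set must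
revisit a vertex, and the first revisit closes a simple cycle). So every nonempty set of vertices
contains a sink, and removing sinks one at a time orders the vertices as `π 0, …, π (n-1)` with
`a_{π j, π i} = 0` for all `i ≤ j`. Row `π j` then vanishes on the `j + 1` columns `π 0, …, π j`.
-/

open scoped Classical

section

open Finset

variable {ι : Type*}

theorem exists_injective_loop_of_mem {s : Finset ι} {q : ℕ → ι} (hq : ∀ t, q t ∈ s) :
    ∃ a k, q (a + (k + 1)) = q a ∧ Function.Injective fun m : Fin (k + 1) => q (a + m) := by
  have hrep : ∃ b, ∃ a < b, q a = q b := by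
    obtain ⟨x, -, y, -, hxy, hqxy⟩ := exists_ne_map_eq_of_card_lt_of_maps_to
      (s := range (#s + 1)) (by simp) (fun t _ => hq t)
    rcases hxy.lt_or_gt with h | h
    exacts [⟨y, x, h, hqxy⟩, ⟨x, y, h, hqxy.symm⟩]
  obtain ⟨a, hab, hqab⟩ := Nat.find_spec hrep
  refine ⟨a, Nat.find hrep - a - 1, by rw [hqab]; congr 1; omega, fun t₁ t₂ h => ?_⟩
  have := t₁.isLt
  have := t₂.isLt
  by_contra hne
  rcases (Fin.val_ne_iff.mpr hne).lt_or_gt with h' | h'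
  · exact Nat.find_min hrep (m := a + t₂) (by omega) ⟨a + t₁, by omega, h⟩
  · exact Nat.find_min hrep (m := a + t₁) (by omega) ⟨a + t₂, by omega, h.symm⟩

theorem rel_of_chain_of_loop {r : ι → ι → Prop} {q : ℕ → ι} (hq : ∀ t, r (q t) (q (t + 1)))
    {a k : ℕ} (hloop : q (a + (k + 1)) = q a) (m : Fin (k + 1)) :
    r (q (a + m)) (q (a + ↑(m + 1))) := by
  rw [Fin.val_add_one]
  split_ifs with hm
  · simpa [hm, ← hloop, add_assoc] using hq (a + k)
  · exact hq (a + m)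

theorem Finset.exists_forall_not_rel_of_acyclic {r : ι → ι → Prop}
    (hr : ∀ (k : ℕ) (i : Fin (k + 1) → ι), Function.Injective i → ∃ m, ¬ r (i m) (i (m + 1)))
    {s : Finset ι} (hs : s.Nonempty) : ∃ v ∈ s, ∀ w ∈ s, ¬ r v w := by
  by_contra! h
  choose! next hnext_mem hnext_rel using h
  obtain ⟨v, hv⟩ := hs
  have hq_mem : ∀ t, next^[t] v ∈ s := fun t => Set.MapsTo.iterate hnext_mem t hv
  have hq_rel : ∀ t, r (next^[t] v) (next^[t + 1] v) := fun t => by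
    rw [Function.iterate_succ_apply']
    exact hnext_rel _ (hq_mem t)
  obtain ⟨a, k, hloop, hinj⟩ := exists_injective_loop_of_mem hq_mem
  obtain ⟨m, hm⟩ := hr k _ hinj
  exact hm (rel_of_chain_of_loop (q := fun t => next^[t] v) hq_rel hloop m)

theorem Finset.exists_topologicalOrder {r : ι → ι → Prop}
    (hsink : ∀ s : Finset ι, s.Nonempty → ∃ v ∈ s, ∀ w ∈ s, ¬ r v w) :
    ∀ (n : ℕ) (s : Finset ι), #s = n → ∃ π : Fin n → ι,
      Function.Injective π ∧ (∀ j, π j ∈ s) ∧ ∀ i j, i ≤ j → ¬ r (π j) (π i) := by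
  intro n
  induction n with
  | zero => exact fun _ _ => ⟨Fin.elim0, Function.injective_of_subsingleton _, nofun, nofun⟩
  | succ n ih =>
    intro s hs
    obtain ⟨v, hv, hv_sink⟩ := hsink s (card_pos.mp (by omega))
    obtain ⟨π, hπ, hπ_mem, hπ_rel⟩ := ih (s.erase v) (by rw [card_erase_of_mem hv, hs]; rfl)
    have hmem (j : Fin (n + 1)) : (Fin.snoc π v : Fin (n + 1) → ι) j ∈ s := by
      induction j using Fin.lastCases with
      | last => simpa using hv
      | cast j => simpa using mem_of_mem_erase (hπ_mem j)
    refine ⟨Fin.snoc π v, Fin.snoc_injective_of_injective hπ ?_, hmem, fun i j hij => ?_⟩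
    · rintro ⟨j, rfl⟩
      exact notMem_erase _ _ (hπ_mem j)
    induction j using Fin.lastCases with
    | last => simpa using hv_sink _ (hmem i)
    | cast j =>
      induction i using Fin.lastCases with
      | last => exact absurd hij (by simp)
      | cast i => simpa using hπ_rel i j (by simpa using hij)

end

/-- If every cyclic product of entries of an `n×n` matrix `A` over pairwise
distinct indices vanishes, then there exist pairwise distinct rows
`π 0, π 1, …` such that row `π j` contains at least `j+1` zero entries
(i.e. for each `j ∈ {1,…,n}` there is a row with at least `j` zeros, and
these rows are pairwise distinct). -/
theorem stmt5 {K : Type*} [Field K] {n : ℕ}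
    (A : Matrix (Fin n) (Fin n) K)
    (hcyc : ∀ (k : ℕ) (i : Fin (k + 1) → Fin n), Function.Injective i →
      ∏ m : Fin (k + 1), A (i m) (i (m + 1)) = 0) :
    ∃ π : Fin n → Fin n, Function.Injective π ∧
      ∀ j : Fin n,
        (j : ℕ) + 1 ≤ (Finset.univ.filter fun c : Fin n => A (π j) c = 0).card := by
  have hsink (s : Finset (Fin n)) (hs : s.Nonempty) : ∃ v ∈ s, ∀ w ∈ s, ¬ A v w ≠ 0 :=
    Finset.exists_forall_not_rel_of_acyclic
      (fun k i hi => by simpa [Finset.prod_eq_zero_iff] using hcyc k i hi) hs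
  obtain ⟨π, hπ, -, hπ_zero⟩ := Finset.exists_topologicalOrder hsink n _ (Finset.card_fin n)
  refine ⟨π, hπ, fun j => ?_⟩
  calc (j : ℕ) + 1 = (Finset.Iic j).card := (Fin.card_Iic j).symm
    _ ≤ _ := Finset.card_le_card_of_injOn π
      (fun i hi => by simpa using hπ_zero i j (Finset.mem_Iic.mp hi)) hπ.injOn
end

section
/- Let A be an n×n matrix over a field such that every cyclic product a_{i_1 i_2} ⋯ a_{i_k i_1} over pairwise distinct indices vanishes. Then there exists a permutation σ of {1,...,n} such that the matrix B with b_{ij} = a_{σ(i) σ(j)} is strictly upper triangular (b_{ij} = 0 whenever i ≥ j). -/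
/-!
If every row had a nonzero entry, choosing one in each row would give a self-map of the finite
index set; a periodic orbit of it is a cycle of pairwise distinct indices whose cyclic product
is a product of nonzero entries, hence nonzero.
So some row `v` vanishes. Putting `v` last and recursing on the submatrix of the other indices,
which inherits the hypothesis, yields the permutation.
-/

open Function

theorem Function.exists_mem_periodicPts {α : Type*} [Finite α] [Nonempty α] (f : α → α) :
    ∃ x, x ∈ periodicPts f := by
  obtain ⟨x₀⟩ := ‹Nonempty α›
  obtain ⟨m, n, heq, hne⟩ : ∃ m n, f^[m] x₀ = f^[n] x₀ ∧ m ≠ n := by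
    simpa [Injective] using not_injective_infinite_finite (f^[·] x₀)
  wlog hlt : m < n generalizing m n
  · exact this n m heq.symm hne.symm (by omega)
  refine ⟨f^[m] x₀, mk_mem_periodicPts (n := n - m) (by omega) ?_⟩
  rw [IsPeriodicPt, IsFixedPt, ← iterate_add_apply, Nat.sub_add_cancel hlt.le, heq]

theorem Function.exists_injective_fin_cycle_s6 {α : Type*} [Finite α] [Nonempty α] (f : α → α) :
    ∃ (k : ℕ) (i : Fin (k + 1) → α), Injective i ∧ ∀ m, i (m + 1) = f (i m) := by
  obtain ⟨x, hx⟩ := exists_mem_periodicPts f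
  obtain ⟨k, hk⟩ := Nat.exists_eq_add_of_lt (minimalPeriod_pos_of_mem_periodicPts hx)
  rw [zero_add] at hk
  have hper : IsPeriodicPt f (k + 1) x := hk ▸ isPeriodicPt_minimalPeriod f x
  refine ⟨k, fun m => f^[m] x, fun m m' h => Fin.ext ?_, fun m => ?_⟩
  · exact iterate_injOn_Iio_minimalPeriod (by simpa [hk] using m.isLt)
      (by simpa [hk] using m'.isLt) h
  · dsimp only
    rw [Fin.val_add, Fin.val_one', Nat.add_mod_mod, hper.iterate_mod_apply,
      iterate_succ_apply']

namespace Matrix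

variable {ι κ R : Type*}

def CyclicProductsVanish [CommMonoidWithZero R] (A : Matrix ι ι R) : Prop :=
  ∀ (k : ℕ) (i : Fin (k + 1) → ι), Injective i → ∏ m : Fin (k + 1), A (i m) (i (m + 1)) = 0

namespace CyclicProductsVanish

variable [CommMonoidWithZero R] {A : Matrix ι ι R}

theorem submatrix (hA : A.CyclicProductsVanish) {e : κ → ι} (he : Injective e) :
    (A.submatrix e e).CyclicProductsVanish :=
  fun k i hi => hA k (e ∘ i) (he.comp hi)

theorem exists_row_eq_zero [NoZeroDivisors R] [Nontrivial R] [Finite ι] [Nonempty ι]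
    (hA : A.CyclicProductsVanish) : ∃ v, ∀ j, A v j = 0 := by
  by_contra! h
  choose f hf using h
  obtain ⟨k, i, hi, hstep⟩ := exists_injective_fin_cycle_s6 f
  refine Finset.prod_ne_zero_iff.2 (fun m _ => ?_) (hA k i hi)
  rw [hstep]
  exact hf (i m)

theorem exists_perm_strictUpperTriangular [NoZeroDivisors R] [Nontrivial R] :
    ∀ {n : ℕ} {A : Matrix (Fin n) (Fin n) R}, A.CyclicProductsVanish →
    ∃ σ : Equiv.Perm (Fin n), ∀ i j, j ≤ i → A (σ i) (σ j) = 0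
  | 0, _, _ => ⟨1, fun i => i.elim0⟩
  | n + 1, A, hA => by
    obtain ⟨v, hv⟩ := hA.exists_row_eq_zero
    obtain ⟨σ, hσ⟩ := exists_perm_strictUpperTriangular
      (hA.submatrix (Fin.succAbove_right_injective (p := v)))
    -- `last n ↦ v` and `castSucc i ↦ v.succAbove (σ i)`
    refine ⟨finSuccEquivLast.trans ((Equiv.optionCongr σ).trans (finSuccEquiv' v).symm),
      fun i j hji => ?_⟩
    induction i using Fin.lastCases with
    | last => simpa using hv _
    | cast i =>
      induction j using Fin.lastCases with
      | last => exact absurd hji (Fin.castSucc_lt_last i).not_ge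
      | cast j => simpa using hσ i j (Fin.castSucc_le_castSucc_iff.mp hji)

end CyclicProductsVanish

end Matrix

/-- If every cyclic product of entries of an `n×n` matrix `A` over pairwise
distinct indices vanishes, then there is a permutation `σ` of the indices such
that `B i j = A (σ i) (σ j)` is strictly upper triangular. -/
theorem stmt6 {K : Type*} [Field K] {n : ℕ}
    (A : Matrix (Fin n) (Fin n) K)
    (hcyc : ∀ (k : ℕ) (i : Fin (k + 1) → Fin n), Function.Injective i →
      ∏ m : Fin (k + 1), A (i m) (i (m + 1)) = 0) :
    ∃ σ : Equiv.Perm (Fin n), ∀ i j : Fin n, j ≤ i → A (σ i) (σ j) = 0 :=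
  Matrix.CyclicProductsVanish.exists_perm_strictUpperTriangular hcyc
end

section
/- An evolution algebra whose structure matrix is strictly upper triangular is a nil algebra: every element has some vanishing right-normed power. -/
structure IsNaturalBasis {K E ι : Type*} [Semiring K] [NonUnitalNonAssocSemiring E] [Module K E]
    [Fintype ι] (b : Module.Basis ι K E) (a : Matrix ι ι K) : Prop where
  mul_of_ne : ∀ i j, i ≠ j → b i * b j = 0
  mul_self : ∀ i, b i * b i = ∑ k, a i k • b k

namespace IsNaturalBasis

variable {K E : Type*} [CommSemiring K] [NonUnitalNonAssocSemiring E] [Module K E]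
  [SMulCommClass K E E] [IsScalarTower K E E]

theorem repr_mul {ι : Type*} [Fintype ι] {b : Module.Basis ι K E} {a : Matrix ι ι K}
    (hb : IsNaturalBasis b a) (y z : E) (k : ι) :
    b.repr (y * z) k = ∑ i, b.repr y i * b.repr z i * a i k := by
  classical
  conv_lhs => rw [← b.sum_repr y, ← b.sum_repr z, Finset.sum_mul_sum]
  simp only [smul_mul_smul_comm, map_sum, map_smul, Finsupp.coe_finsetSum,
    Finset.sum_apply, Finsupp.smul_apply, smul_eq_mul]
  refine Finset.sum_congr rfl fun i _ => ?_
  rw [Finset.sum_eq_single i (fun j _ hji => by simp [hb.mul_of_ne i j (Ne.symm hji)])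
    (by simp), hb.mul_self i]
  simp [Finsupp.single_apply, mul_comm]

variable {n : ℕ} {b : Module.Basis (Fin n) K E} {a : Matrix (Fin n) (Fin n) K}

theorem repr_mul_eq_zero_of_le (hb : IsNaturalBasis b a) (ha : ∀ i j, j ≤ i → a i j = 0)
    {y : E} {m : ℕ} (hy : ∀ i : Fin n, (i : ℕ) < m → b.repr y i = 0) (z : E) {k : Fin n}
    (hk : (k : ℕ) ≤ m) : b.repr (y * z) k = 0 := by
  rw [hb.repr_mul]
  refine Finset.sum_eq_zero fun i _ => ?_
  by_cases hi : (i : ℕ) < m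
  · simp [hy i hi]
  · simp [ha i k (by omega)]

theorem repr_rnpow_eq_zero_of_lt (hb : IsNaturalBasis b a) (ha : ∀ i j, j ≤ i → a i j = 0)
    (x : E) (m : ℕ) : ∀ k : Fin n, (k : ℕ) < m → b.repr (rnpow x m) k = 0 := by
  induction m with
  | zero => intro k hk; omega
  | succ m ih => exact fun k hk => hb.repr_mul_eq_zero_of_le ha ih x (Nat.lt_succ_iff.mp hk)

theorem rnpow_eq_zero (hb : IsNaturalBasis b a) (ha : ∀ i j, j ≤ i → a i j = 0) (x : E) :
    rnpow x n = 0 :=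
  b.repr.injective <| Finsupp.ext fun k => by
    simpa using hb.repr_rnpow_eq_zero_of_lt ha x n k k.isLt

end IsNaturalBasis

/-- An evolution algebra with strictly upper triangular structure matrix is a
nil algebra: every element has a vanishing right-normed power. -/
theorem stmt8 {K : Type*} [Field K] {E : Type*} [NonUnitalNonAssocRing E]
    [Module K E] [SMulCommClass K E E] [IsScalarTower K E E]
    {n : ℕ} (b : Module.Basis (Fin n) K E) (a : Matrix (Fin n) (Fin n) K)
    (hmul0 : ∀ i j, i ≠ j → b i * b j = 0)
    (hsq : ∀ i, b i * b i = ∑ k, a i k • b k)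
    (htri : ∀ i j : Fin n, j ≤ i → a i j = 0) :
    ∀ x : E, ∃ m : ℕ, rnpow x (m + 1) = 0 := by
  intro x
  have hb : IsNaturalBasis b a := ⟨hmul0, hsq⟩
  exact ⟨n, by rw [rnpow, hb.rnpow_eq_zero htri x, zero_mul]⟩
end

section
/- Let E be a 3-dimensional evolution algebra with strictly upper triangular structure matrix A. Then E^3 = 0 if and only if a_{12} a_{23} = 0, where E^1 = E and E^k = Σ_{i=1}^{k-1} E^i E^{k-i}. -/
variable (K : Type*) [Field K] (E : Type*) [NonUnitalNonAssocRing E]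
  [Module K E] [SMulCommClass K E E] [IsScalarTower K E E]

/-- The span of the set of products `x*y` with `x ∈ P`, `y ∈ Q`. -/
def msMul (P Q : Submodule K E) : Submodule K E :=
  Submodule.span K {z : E | ∃ x ∈ P, ∃ y ∈ Q, z = x * y}

/-- Lower central series: `lcs K E 1 = E¹ = E`,
`lcs K E k = Eᵏ = ∑_{i=1}^{k-1} Eⁱ·E^{k-i}` for `k ≥ 2`. -/
def lcs : ℕ → Submodule K E
  | 0 => ⊥
  | 1 => ⊤
  | (m + 2) => ⨆ i : Fin (m + 1), msMul K E (lcs (i.val + 1)) (lcs (m + 1 - i.val))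
  termination_by k => k
  decreasing_by
  · have := i.isLt; omega
  · have := i.isLt; omega

/-!
In an evolution algebra with natural basis `(eᵢ)` the product is `xy = ∑ xᵢ yᵢ eᵢ²`, so the
algebra is commutative and `E²` is spanned by the squares `eᵢ²`. If every square lies in the
span of basis vectors whose own squares vanish, that span annihilates `E`, hence
`E³ = E²E + EE² = 0`. For the triangular structure matrix this happens with `{e₃}` when
`a₁₂ = 0` and with `{e₂, e₃}` when `a₂₃ = 0`. Conversely `(e₁e₁)e₂ = a₁₂a₂₃ e₃ ∈ E³`.
-/

section LowerCentralSeries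

variable {K : Type*} [Field K] {E : Type*} [NonUnitalNonAssocRing E] [Module K E]

theorem msMul_le_iff {P Q R : Submodule K E} :
    msMul K E P Q ≤ R ↔ ∀ x ∈ P, ∀ y ∈ Q, x * y ∈ R := by
  simp only [msMul, Submodule.span_le, Set.subset_def, Set.mem_ofPred_eq, SetLike.mem_coe]
  grind

theorem mul_mem_msMul {P Q : Submodule K E} {x y : E} (hx : x ∈ P) (hy : y ∈ Q) :
    x * y ∈ msMul K E P Q :=
  Submodule.subset_span ⟨x, hx, y, hy, rfl⟩

variable (K E)

theorem lcs_one : lcs K E 1 = ⊤ := lcs.eq_2 K E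

theorem lcs_two : lcs K E 2 = msMul K E ⊤ ⊤ := by
  rw [lcs.eq_3, ← Finset.sup_univ_eq_iSup]
  simp [lcs_one]

theorem lcs_three :
    lcs K E 3 = msMul K E ⊤ (lcs K E 2) ⊔ msMul K E (lcs K E 2) ⊤ := by
  rw [lcs.eq_3, ← Finset.sup_univ_eq_iSup, Fin.univ_succ]
  simp [lcs_one]

theorem mul_mul_mem_lcs_three (x y z : E) : x * y * z ∈ lcs K E 3 := by
  rw [lcs_three, lcs_two]
  exact Submodule.mem_sup_right (mul_mem_msMul (mul_mem_msMul trivial trivial) trivial)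

end LowerCentralSeries

section EvolutionAlgebra

variable {K : Type*} [Field K] {E : Type*} [NonUnitalNonAssocRing E] [Module K E] {ι : Type*}

def Module.Basis.IsNatural (b : Module.Basis ι K E) : Prop :=
  ∀ i j, i ≠ j → b i * b j = 0

namespace Module.Basis.IsNatural

variable [SMulCommClass K E E] [IsScalarTower K E E] [Fintype ι] {b : Module.Basis ι K E}

theorem mul_eq_sum (hb : b.IsNatural) (x y : E) :
    x * y = ∑ i, (b.repr x i * b.repr y i) • (b i * b i) := by
  conv_lhs => rw [← b.sum_repr x, ← b.sum_repr y]
  simp only [Finset.sum_mul, Finset.mul_sum, smul_mul_smul_comm]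
  refine Finset.sum_congr rfl fun i _ => Finset.sum_eq_single i (fun j _ hji => ?_) (by simp)
  rw [hb j i hji, smul_zero]

protected theorem mul_comm (hb : b.IsNatural) (x y : E) : x * y = y * x := by
  simp only [hb.mul_eq_sum x y, hb.mul_eq_sum y x, mul_comm]

theorem mul_eq_zero_of_mem_span_image (hb : b.IsNatural) {s : Set ι}
    (hs : ∀ i ∈ s, b i * b i = 0) {z : E} (hz : z ∈ Submodule.span K (b '' s)) (y : E) :
    z * y = 0 := by
  rw [hb.mul_eq_sum]
  refine Finset.sum_eq_zero fun i _ => ?_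
  by_cases hi : i ∈ s
  · rw [hs i hi, smul_zero]
  · rw [Finsupp.notMem_support_iff.mp fun h => hi (b.mem_span_image.mp hz h), zero_mul, zero_smul]

theorem lcs_three_eq_bot (hb : b.IsNatural) {s : Set ι} (hs : ∀ i ∈ s, b i * b i = 0)
    (hsq : ∀ i, b i * b i ∈ Submodule.span K (b '' s)) : lcs K E 3 = ⊥ := by
  have hE2 : lcs K E 2 ≤ Submodule.span K (b '' s) := by
    rw [lcs_two, msMul_le_iff]
    intro x _ y _
    rw [hb.mul_eq_sum]
    exact Submodule.sum_mem _ fun i _ => Submodule.smul_mem _ _ (hsq i)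
  rw [lcs_three, eq_bot_iff, sup_le_iff, msMul_le_iff, msMul_le_iff]
  constructor
  · intro x _ z hz
    rw [hb.mul_comm]
    exact hb.mul_eq_zero_of_mem_span_image hs (hE2 hz) x
  · intro z hz y _
    exact hb.mul_eq_zero_of_mem_span_image hs (hE2 hz) y

end Module.Basis.IsNatural

end EvolutionAlgebra

/-- For a 3-dimensional evolution algebra with strictly upper triangular
structure matrix, `E³ = 0` iff `a₁₂ a₂₃ = 0`. -/
theorem stmt10 {K : Type*} [Field K] {E : Type*} [NonUnitalNonAssocRing E]
    [Module K E] [SMulCommClass K E E] [IsScalarTower K E E]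
    (b : Module.Basis (Fin 3) K E) (a : Matrix (Fin 3) (Fin 3) K)
    (hmul0 : ∀ i j, i ≠ j → b i * b j = 0)
    (hsq : ∀ i, b i * b i = ∑ k, a i k • b k)
    (htri : ∀ i j : Fin 3, j ≤ i → a i j = 0) :
    lcs K E 3 = ⊥ ↔ a 0 1 * a 1 2 = 0 := by
  have h0 : b 0 * b 0 = a 0 1 • b 1 + a 0 2 • b 2 := by
    simp [hsq, Fin.sum_univ_three, htri 0 0 le_rfl]
  have h1 : b 1 * b 1 = a 1 2 • b 2 := by
    simp [hsq, Fin.sum_univ_three, htri 1 0 (by decide), htri 1 1 le_rfl]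
  have h2 : b 2 * b 2 = 0 := by
    simp [hsq, Fin.sum_univ_three, htri 2 0 (by decide), htri 2 1 (by decide), htri 2 2 le_rfl]
  have hb : b.IsNatural := hmul0
  have hwit : b 0 * b 0 * b 1 = (a 0 1 * a 1 2) • b 2 := by
    rw [h0, add_mul, smul_mul_assoc, smul_mul_assoc, h1, hb 2 1 (by decide), smul_zero,
      add_zero, smul_smul]
  constructor
  · intro h3
    have hmem := mul_mul_mem_lcs_three K E (b 0) (b 0) (b 1)
    rw [h3, hwit, Submodule.mem_bot, smul_eq_zero] at hmem
    exact hmem.resolve_right (b.ne_zero 2)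
  · intro h
    obtain h01 | h12 := mul_eq_zero.mp h
    · refine hb.lcs_three_eq_bot (s := {2}) (by simp [h2]) fun i => ?_
      fin_cases i
      · simp [h0, h01, Submodule.smul_mem]
      · simp [h1, Submodule.smul_mem]
      · simp [h2]
    · refine hb.lcs_three_eq_bot (s := {1, 2}) (by simp [h1, h2, h12]) fun i => ?_
      fin_cases i
      · simp [h0, Submodule.add_mem, Submodule.smul_mem]
      · simp [h1, h12]
      · simp [h2]
end

section
/- The 2-dimensional complex evolution algebras E_2 (e_1² = e_1, e_2² = e_1) and E_3 (e_1² = e_1 + e_2, e_2² = -e_1 - e_2) are not isomorphic as algebras. -/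
/-!
In `E₃` the square of `x₀ e₁ + x₁ e₂` is `(x₀² - x₁²)(e₁ + e₂)`, and `e₁ + e₂` squares to zero,
so `E₃` has no nonzero idempotent; an isomorphism would carry the nonzero idempotent `e₁` of `E₂`
to one.
-/

theorem add_mul_self_eq_zero_of_mul_self_eq {F : Type*} [NonUnitalNonAssocRing F] {u v : F}
    (huv : u * v = 0) (hvu : v * u = 0) (hu : u * u = u + v) (hv : v * v = -(u + v)) :
    (u + v) * (u + v) = 0 := by
  rw [add_mul, mul_add, mul_add, hu, huv, hvu, hv]
  abel

section EvolutionAlgebraE3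

variable {R F : Type*} [CommRing R] [NonUnitalNonAssocRing F] [Module R F]
  [SMulCommClass R F F] [IsScalarTower R F F] (c : Module.Basis (Fin 2) R F)

theorem mul_self_eq_smul_basis_sum (hc01 : c 0 * c 1 = 0) (hc10 : c 1 * c 0 = 0)
    (hc0 : c 0 * c 0 = c 0 + c 1) (hc1 : c 1 * c 1 = -(c 0 + c 1)) (y : F) :
    y * y = (c.repr y 0 * c.repr y 0 - c.repr y 1 * c.repr y 1) • (c 0 + c 1) := by
  conv_lhs => rw [← c.sum_repr y, Fin.sum_univ_two]
  simp only [add_mul, mul_add, smul_mul_assoc, mul_smul_comm, hc0, hc01, hc10, hc1]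
  module

theorem eq_zero_of_isIdempotentElem (hc01 : c 0 * c 1 = 0) (hc10 : c 1 * c 0 = 0)
    (hc0 : c 0 * c 0 = c 0 + c 1) (hc1 : c 1 * c 1 = -(c 0 + c 1)) {e : F}
    (he : IsIdempotentElem e) : e = 0 := by
  have hsq : e * e * (e * e) = 0 := by
    rw [mul_self_eq_smul_basis_sum c hc01 hc10 hc0 hc1 e, smul_mul_smul_comm,
      add_mul_self_eq_zero_of_mul_self_eq hc01 hc10 hc0 hc1, smul_zero]
  rwa [he.eq, he.eq] at hsq

end EvolutionAlgebraE3

theorem stmt14_general {E F : Type*} [NonUnitalNonAssocRing E] [NonUnitalNonAssocRing F]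
    [Module ℂ E] [SMulCommClass ℂ E E] [IsScalarTower ℂ E E]
    [Module ℂ F] [SMulCommClass ℂ F F] [IsScalarTower ℂ F F]
    (b : Module.Basis (Fin 2) ℂ E) (c : Module.Basis (Fin 2) ℂ F)
    (hb0 : b 0 * b 0 = b 0)
    (hc01 : c 0 * c 1 = 0) (hc10 : c 1 * c 0 = 0)
    (hc0 : c 0 * c 0 = c 0 + c 1) (hc1 : c 1 * c 1 = -(c 0 + c 1)) :
    ¬ ∃ φ : E ≃ₗ[ℂ] F, ∀ x y : E, φ (x * y) = φ x * φ y := by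
  rintro ⟨φ, hφ⟩
  have hidem : IsIdempotentElem (φ (b 0)) := by
    rw [IsIdempotentElem, ← hφ, hb0]
  have hzero : φ (b 0) = 0 := eq_zero_of_isIdempotentElem c hc01 hc10 hc0 hc1 hidem
  exact b.ne_zero 0 (φ.map_eq_zero_iff.mp hzero)

/-- The 2-dimensional complex evolution algebras
`E₂` (`e₁² = e₁`, `e₂² = e₁`) and `E₃` (`e₁² = e₁ + e₂`, `e₂² = -e₁ - e₂`),
both with `e₁e₂ = e₂e₁ = 0`, are not isomorphic as algebras. -/
theorem stmt14 {E F : Type*} [NonUnitalNonAssocRing E] [NonUnitalNonAssocRing F]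
    [Module ℂ E] [SMulCommClass ℂ E E] [IsScalarTower ℂ E E]
    [Module ℂ F] [SMulCommClass ℂ F F] [IsScalarTower ℂ F F]
    (b : Module.Basis (Fin 2) ℂ E) (c : Module.Basis (Fin 2) ℂ F)
    (hb01 : b 0 * b 1 = 0) (hb10 : b 1 * b 0 = 0)
    (hb0 : b 0 * b 0 = b 0) (hb1 : b 1 * b 1 = b 0)
    (hc01 : c 0 * c 1 = 0) (hc10 : c 1 * c 0 = 0)
    (hc0 : c 0 * c 0 = c 0 + c 1) (hc1 : c 1 * c 1 = -(c 0 + c 1)) :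
    ¬ ∃ φ : E ≃ₗ[ℂ] F, ∀ x y : E, φ (x * y) = φ x * φ y :=
  stmt14_general b c hb0 hc01 hc10 hc0 hc1
end

section
/- For a_4 ≠ 0 and a_4' ≠ 0, the 2-dimensional complex evolution algebras E_6(a_4) and E_6(a_4') given by e_1² = e_2, e_2² = e_1 + a_4 e_2 (resp. with a_4') are isomorphic via an evolution-basis-preserving isomorphism (i.e., one sending the natural basis to scalar multiples of natural basis elements) if and only if a_4'/a_4 is a cube root of unity. -/
/-! A scaling isomorphism sends `b i ↦ sᵢ • c (σ i)`. The swap is impossible: `φ (b 0)²` is a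
multiple of `c 1 * c 1 = c 0 + a' • c 1`, which has a nonzero `c 1`-coordinate, while
`φ (b 1)` is a multiple of `c 0`. For `σ = 1`, multiplicativity on the basis amounts to
`s₁ = s₀²`, `s₀ = s₁²` and `a s₁ = s₁² a'`, which force `s₀³ = 1` and `a' = s₀ a`; conversely,
when `(a'/a)³ = 1` the scalars `s₀ = a'/a`, `s₁ = s₀²` satisfy these equations. -/

open Module

theorem LinearMap.map_mul_iff_basis {R A B ι : Type*} [CommSemiring R]
    [NonUnitalNonAssocSemiring A] [Module R A] [SMulCommClass R A A] [IsScalarTower R A A]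
    [NonUnitalNonAssocSemiring B] [Module R B] [SMulCommClass R B B] [IsScalarTower R B B]
    (b : Basis ι R A) (φ : A →ₗ[R] B) :
    (∀ x y, φ (x * y) = φ x * φ y) ↔ ∀ i j, φ (b i * b j) = φ (b i) * φ (b j) := by
  refine ⟨fun h i j ↦ h _ _, fun h x y ↦ ?_⟩
  have key : (LinearMap.mul R A).compr₂ φ = (LinearMap.mul R B).compl₁₂ φ φ :=
    LinearMap.ext_basis b b h
  exact LinearMap.congr_fun₂ key x y

theorem Module.Basis.linearIndependent_pair {R M : Type*} [Semiring R] [AddCommMonoid M]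
    [Module R M] (c : Basis (Fin 2) R M) : LinearIndependent R ![c 0, c 1] := by
  convert c.linearIndependent
  ext i
  fin_cases i <;> rfl

theorem Equiv.Perm.fin_two_eq_one_or_eq_swap (σ : Equiv.Perm (Fin 2)) :
    σ = 1 ∨ σ = Equiv.swap 0 1 := by
  revert σ
  decide

theorem Module.Basis.exists_linearEquiv_apply_eq_smul {R M N ι : Type*} [CommSemiring R]
    [AddCommMonoid M] [Module R M] [AddCommMonoid N] [Module R N]
    (b : Basis ι R M) (c : Basis ι R N) {w : ι → R} (hw : ∀ i, IsUnit (w i)) :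
    ∃ φ : M ≃ₗ[R] N, ∀ i, φ (b i) = w i • c i :=
  ⟨b.equiv (c.isUnitSMul hw) (Equiv.refl ι), fun i ↦ by simp [Basis.isUnitSMul_apply]⟩

section E6

variable {K E F : Type*} [Field K]
  [NonUnitalNonAssocRing E] [Module K E] [SMulCommClass K E E] [IsScalarTower K E E]
  [NonUnitalNonAssocRing F] [Module K F] [SMulCommClass K F F] [IsScalarTower K F F]
  {a a' s t : K} {b : Basis (Fin 2) K E} {c : Basis (Fin 2) K F}

theorem e6_diagonal_map_mul_iff
    (hb01 : b 0 * b 1 = 0) (hb10 : b 1 * b 0 = 0)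
    (hb0 : b 0 * b 0 = b 1) (hb1 : b 1 * b 1 = b 0 + a • b 1)
    (hc01 : c 0 * c 1 = 0) (hc10 : c 1 * c 0 = 0)
    (hc0 : c 0 * c 0 = c 1) (hc1 : c 1 * c 1 = c 0 + a' • c 1)
    (φ : E →ₗ[K] F) (h0 : φ (b 0) = s • c 0) (h1 : φ (b 1) = t • c 1) :
    (∀ x y, φ (x * y) = φ x * φ y) ↔ t = s * s ∧ s = t * t ∧ a * t = t * t * a' := by
  have hc := c.linearIndependent_pair
  rw [φ.map_mul_iff_basis b]
  simp only [Fin.forall_fin_two, hb01, hb10, hb0, hb1, map_add, map_smul, h0, h1,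
    smul_mul_smul_comm, hc01, hc10, hc0, hc1, smul_add, smul_smul, map_zero,
    smul_zero, and_true, true_and, smul_left_inj (c.ne_zero 1)]
  refine ⟨fun ⟨h00, h11⟩ ↦ ⟨h00, hc.eq_of_pair h11⟩, fun ⟨h00, h11a, h11b⟩ ↦ ⟨h00, ?_⟩⟩
  rw [h11b, ← h11a]

theorem e6_smul_basis_one_mul_self_ne (hc1 : c 1 * c 1 = c 0 + a' • c 1) (ha' : a' ≠ 0)
    (hs : s ≠ 0) : (s • c 1) * (s • c 1) ≠ t • c 0 := by
  intro h
  rw [smul_mul_smul_comm, hc1, smul_add, smul_smul] at h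
  have h' : (s * s) • c 0 + (s * s * a') • c 1 = t • c 0 + (0 : K) • c 1 := by
    rwa [zero_smul, add_zero]
  exact mul_ne_zero (mul_ne_zero hs hs) ha' (c.linearIndependent_pair.eq_of_pair h').2

end E6

theorem exists_e6_scaling_iff_div_pow_three_eq_one {K : Type*} [Field K] {a a' : K}
    (ha : a ≠ 0) (ha' : a' ≠ 0) :
    (∃ s t : K, s ≠ 0 ∧ t = s * s ∧ s = t * t ∧ a * t = t * t * a') ↔ (a' / a) ^ 3 = 1 := by
  constructor
  · rintro ⟨s, t, hs, hts, hst, hat⟩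
    have hs3 : s ^ 3 = 1 := by
      have : s * (s ^ 3 - 1) = 0 := by linear_combination -hst - (t + s * s) * hts
      exact sub_eq_zero.1 ((mul_eq_zero.1 this).resolve_left hs)
    have ha' : a' = s * a :=
      mul_left_cancel₀ hs (by linear_combination -hat + a * hts + a' * hst)
    rw [ha', mul_div_cancel_right₀ _ ha, hs3]
  · intro h
    refine ⟨a' / a, (a' / a) * (a' / a), div_ne_zero ha' ha, rfl, ?_, ?_⟩
    · linear_combination -(a' / a) * h
    · have hsa : a * (a' / a) = a' := mul_div_cancel₀ a' ha
      linear_combination (a' / a) * hsa - (a' / a) * a' * h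

/-- For `a ≠ 0`, `a' ≠ 0`, the 2-dimensional complex evolution algebras
`E₆(a)` (`e₁² = e₂`, `e₂² = e₁ + a e₂`) and `E₆(a')` are isomorphic via an
isomorphism sending the natural basis to scalar multiples of natural basis
elements iff `a'/a` is a cube root of unity. -/
theorem stmt15 {E F : Type*} [NonUnitalNonAssocRing E] [NonUnitalNonAssocRing F]
    [Module ℂ E] [SMulCommClass ℂ E E] [IsScalarTower ℂ E E]
    [Module ℂ F] [SMulCommClass ℂ F F] [IsScalarTower ℂ F F]
    (a a' : ℂ) (ha : a ≠ 0) (ha' : a' ≠ 0)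
    (b : Module.Basis (Fin 2) ℂ E) (c : Module.Basis (Fin 2) ℂ F)
    (hb01 : b 0 * b 1 = 0) (hb10 : b 1 * b 0 = 0)
    (hb0 : b 0 * b 0 = b 1) (hb1 : b 1 * b 1 = b 0 + a • b 1)
    (hc01 : c 0 * c 1 = 0) (hc10 : c 1 * c 0 = 0)
    (hc0 : c 0 * c 0 = c 1) (hc1 : c 1 * c 1 = c 0 + a' • c 1) :
    (∃ φ : E ≃ₗ[ℂ] F, (∀ x y : E, φ (x * y) = φ x * φ y) ∧
        ∃ σ : Equiv.Perm (Fin 2), ∀ i : Fin 2, ∃ s : ℂ, s ≠ 0 ∧ φ (b i) = s • c (σ i)) ↔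
      (a' / a) ^ 3 = 1 := by
  rw [← exists_e6_scaling_iff_div_pow_three_eq_one ha ha']
  constructor
  · rintro ⟨φ, hmul, σ, hσ⟩
    obtain ⟨s, hs, h0⟩ := hσ 0
    obtain ⟨t, -, h1⟩ := hσ 1
    rcases σ.fin_two_eq_one_or_eq_swap with rfl | rfl
    · exact ⟨s, t, hs, (e6_diagonal_map_mul_iff hb01 hb10 hb0 hb1 hc01 hc10 hc0 hc1
        φ.toLinearMap h0 h1).1 hmul⟩
    · have h := hmul (b 0) (b 0)
      rw [hb0, h0, h1] at h
      exact absurd h.symm (e6_smul_basis_one_mul_self_ne hc1 ha' hs)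
  · rintro ⟨s, t, hs, hts, hst, hat⟩
    have ht : t ≠ 0 := hts ▸ mul_ne_zero hs hs
    obtain ⟨φ, hφ⟩ := b.exists_linearEquiv_apply_eq_smul c (w := ![s, t])
      (Fin.forall_fin_two.2 ⟨hs.isUnit, ht.isUnit⟩)
    refine ⟨φ, (e6_diagonal_map_mul_iff hb01 hb10 hb0 hb1 hc01 hc10 hc0 hc1
      φ.toLinearMap (hφ 0) (hφ 1)).2 ⟨hts, hst, hat⟩, 1, Fin.forall_fin_two.2 ?_⟩
    exact ⟨⟨s, hs, hφ 0⟩, ⟨t, ht, hφ 1⟩⟩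
end

section
/- Let E be a 2n-dimensional evolution algebra whose structure matrix A is block diagonal with 2×2 blocks ((a_k, b_k), (c_k, d_k)), and suppose det(A) ≠ 0. If φ: E → E is an algebra isomorphism whose images φ(e_i) again form a natural basis, then the matrix (α_{ij}) of φ has exactly one nonzero entry in each row and each column, i.e., φ is a scaled permutation matrix. -/
/-!
In a natural basis `b` the product is computed coordinatewise followed by the structure
matrix: `b.repr (x * y) = (b.repr x * b.repr y) ᵥ* A`. When `A` is invertible, `x * y = 0`
therefore forces `x` and `y` to have disjoint supports in `b`. The images `φ (b i)` are
nonzero and pairwise multiply to zero, so the rows of the matrix of `φ` are nonzero with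
pairwise disjoint supports; a square matrix with this property has exactly one nonzero entry
in each row and each column.
-/

open Matrix

section Combinatorics

variable {ι R : Type*} [Finite ι] [Zero R]

theorem Matrix.existsUnique_ne_zero_of_disjoint_rows (M : Matrix ι ι R)
    (hrow : ∀ i, ∃ j, M i j ≠ 0) (hcol : ∀ i i' j, M i j ≠ 0 → M i' j ≠ 0 → i = i') :
    (∀ i, ∃! j, M i j ≠ 0) ∧ (∀ j, ∃! i, M i j ≠ 0) := by
  choose g hg using hrow
  have hg_inj : Function.Injective g := fun i i' h => hcol i i' (g i) (hg i) (h ▸ hg i')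
  have hg_surj : Function.Surjective g := Finite.surjective_of_injective hg_inj
  refine ⟨fun i => ⟨g i, hg i, fun j hj => ?_⟩, fun j => ?_⟩
  · obtain ⟨i', rfl⟩ := hg_surj j
    rw [hcol i i' (g i') hj (hg i')]
  · obtain ⟨i, rfl⟩ := hg_surj j
    exact ⟨i, hg i, fun i' hi' => hcol i' i (g i) hi' (hg i)⟩

end Combinatorics

namespace Module.Basis

variable {K E ι : Type*} [CommRing K] [NonUnitalNonAssocRing E] [Module K E]
  [SMulCommClass K E E] [IsScalarTower K E E] [Fintype ι]
  (b : Basis ι K E) {A : Matrix ι ι K}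

theorem mul_eq_sum_smul_mul_self (hmul0 : ∀ i j, i ≠ j → b i * b j = 0) (x y : E) :
    x * y = ∑ k, (b.repr x k * b.repr y k) • (b k * b k) := by
  conv_lhs => rw [← b.sum_repr x, ← b.sum_repr y, Finset.sum_mul_sum]
  refine Finset.sum_congr rfl fun k _ => ?_
  rw [Finset.sum_eq_single k (fun l _ hl => by rw [smul_mul_smul_comm, hmul0 k l hl.symm,
    smul_zero]) (by simp), smul_mul_smul_comm]

theorem repr_mul_eq_vecMul (hmul0 : ∀ i j, i ≠ j → b i * b j = 0)
    (hsq : ∀ i, b i * b i = ∑ k, A i k • b k) (x y : E) :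
    ⇑(b.repr (x * y)) = (⇑(b.repr x) * ⇑(b.repr y)) ᵥ* A := by
  rw [b.mul_eq_sum_smul_mul_self hmul0]
  simp_rw [hsq, Finset.smul_sum, smul_smul]
  rw [Finset.sum_comm]
  simp_rw [← Finset.sum_smul]
  rw [b.repr_sum_self]
  rfl

theorem repr_mul_repr_eq_zero_of_mul_eq_zero [IsDomain K] [DecidableEq ι]
    (hmul0 : ∀ i j, i ≠ j → b i * b j = 0) (hsq : ∀ i, b i * b i = ∑ k, A i k • b k)
    (hdet : A.det ≠ 0) {x y : E} (hxy : x * y = 0) (k : ι) :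
    b.repr x k * b.repr y k = 0 := by
  have hv : (⇑(b.repr x) * ⇑(b.repr y)) ᵥ* A = 0 := by
    rw [← b.repr_mul_eq_vecMul hmul0 hsq, hxy, map_zero, Finsupp.coe_zero]
  by_contra hk
  exact hdet (Matrix.exists_vecMul_eq_zero_iff.mp ⟨_, fun h => hk (congrFun h k), hv⟩)

end Module.Basis

theorem stmt16_general {K : Type*} [Field K] {E : Type*} [NonUnitalNonAssocRing E]
    [Module K E] [SMulCommClass K E E] [IsScalarTower K E E]
    {n : ℕ} (b : Module.Basis (Fin (2 * n)) K E) (A : Matrix (Fin (2 * n)) (Fin (2 * n)) K)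
    (hmul0 : ∀ i j, i ≠ j → b i * b j = 0)
    (hsq : ∀ i, b i * b i = ∑ k, A i k • b k)
    (hdet : A.det ≠ 0)
    (φ : E ≃ₗ[K] E)
    (hnat : ∀ i j, i ≠ j → φ (b i) * φ (b j) = 0) :
    (∀ i, ∃! j, b.repr (φ (b i)) j ≠ 0) ∧
      (∀ j, ∃! i, b.repr (φ (b i)) j ≠ 0) := by
  refine Matrix.existsUnique_ne_zero_of_disjoint_rows (fun i j => b.repr (φ (b i)) j)
    (fun i => ?_) (fun i i' j hi hi' => ?_)
  · exact Finsupp.ne_iff.mp <| (map_ne_zero_iff _ b.repr.injective).mpr <|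
      (map_ne_zero_iff _ φ.injective).mpr (b.ne_zero i)
  · by_contra hne
    exact mul_ne_zero hi hi'
      (b.repr_mul_repr_eq_zero_of_mul_eq_zero hmul0 hsq hdet (hnat i i' hne) j)

/-- Let `E` be a `2n`-dimensional evolution algebra whose structure matrix `A`
is block diagonal with `2×2` blocks (entries `A i j` vanish unless `i`, `j`
lie in the same block `{2k, 2k+1}`), with `det A ≠ 0`.  If `φ : E → E` is an
algebra isomorphism whose images `φ(eᵢ)` again form a natural basis (pairwise
products vanish), then the matrix of `φ` has exactly one nonzero entry in each
row and in each column. -/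
theorem stmt16 {K : Type*} [Field K] {E : Type*} [NonUnitalNonAssocRing E]
    [Module K E] [SMulCommClass K E E] [IsScalarTower K E E]
    {n : ℕ} (b : Module.Basis (Fin (2 * n)) K E) (A : Matrix (Fin (2 * n)) (Fin (2 * n)) K)
    (hmul0 : ∀ i j, i ≠ j → b i * b j = 0)
    (hsq : ∀ i, b i * b i = ∑ k, A i k • b k)
    (hblock : ∀ i j : Fin (2 * n), i.val / 2 ≠ j.val / 2 → A i j = 0)
    (hdet : A.det ≠ 0)
    (φ : E ≃ₗ[K] E) (hφ : ∀ x y : E, φ (x * y) = φ x * φ y)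
    (hnat : ∀ i j, i ≠ j → φ (b i) * φ (b j) = 0) :
    (∀ i, ∃! j, b.repr (φ (b i)) j ≠ 0) ∧
      (∀ j, ∃! i, b.repr (φ (b i)) j ≠ 0) :=
  stmt16_general b A hmul0 hsq hdet φ hnat
end
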